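/- Let F = (f_1,…,f_N) be a uniform tight frame with bound A > 0 for an n-dimensional complex inner product space H and let p > 1. Then ⟨f_i, f_i/A⟩ = n/N for all i, the 1-erasure spectral average error of F with its canonical dual equals AE_R^{(1),p}(F, S_F^{-1}F) = n/N, and AE_R^{(1),p}(F, S_F^{-1}F) ≤ AE_R^{(1),p}(F, G) for every dual frame G of F; that is, the canonical dual S_F^{-1}F = (f_i/A) is a 1-erasure spectrally optimal dual of F. -/

import Mathlib

open scoped ComplexInnerProductSpace InnerProductSpace
open Module

/-!
For a tight frame the frame operator is `A • id`, whose trace `A n` equals `∑ ‖fᵢ‖²`; uniformity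
then gives `‖fᵢ‖² = A n / N`, so every diagonal entry `⟪fᵢ / A, fᵢ⟫` of the canonical dual is
`n / N`. For an arbitrary dual `G`, `∑ ⟪fᵢ, gᵢ⟫` is the trace of the identity, namely `n`, so the
arithmetic mean of the `|⟪gᵢ, fᵢ⟫|` is at least `n / N`, and the power mean inequality bounds
the `p`-mean from below by the arithmetic mean.
-/

section Frame

variable {𝕜 H ι : Type*} [RCLike 𝕜] [NormedAddCommGroup H] [InnerProductSpace 𝕜 H]
  [FiniteDimensional 𝕜 H] [Fintype ι]

theorem sum_norm_sq_eq_mul_finrank_of_tight {f : ι → H} {A : ℝ}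
    (htight : ∀ x, ∑ i, ‖⟪f i, x⟫_𝕜‖ ^ 2 = A * ‖x‖ ^ 2) :
    ∑ i, ‖f i‖ ^ 2 = A * finrank 𝕜 H := by
  let b := stdOrthonormalBasis 𝕜 H
  calc ∑ i, ‖f i‖ ^ 2 = ∑ i, ∑ j, ‖⟪f i, b j⟫_𝕜‖ ^ 2 := by
        simp only [b.sum_sq_norm_inner_left]
    _ = ∑ j, A * ‖b j‖ ^ 2 := by rw [Finset.sum_comm]; simp only [htight]
    _ = A * finrank 𝕜 H := by simp [b.orthonormal.1, mul_comm]

theorem sum_inner_eq_finrank_of_dual {f g : ι → H} (hdual : ∀ x, x = ∑ i, ⟪f i, x⟫_𝕜 • g i) :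
    ∑ i, ⟪f i, g i⟫_𝕜 = finrank 𝕜 H := by
  let b := stdOrthonormalBasis 𝕜 H
  have hb : ∀ j, ∑ i, ⟪f i, b j⟫_𝕜 * ⟪b j, g i⟫_𝕜 = 1 := fun j => by
    calc ∑ i, ⟪f i, b j⟫_𝕜 * ⟪b j, g i⟫_𝕜 = ⟪b j, ∑ i, ⟪f i, b j⟫_𝕜 • g i⟫_𝕜 := by
          simp only [inner_sum, inner_smul_right]
      _ = 1 := by
          rw [← hdual (b j), inner_self_eq_one_of_norm_eq_one (b.orthonormal.1 j)]
  calc ∑ i, ⟪f i, g i⟫_𝕜 = ∑ i, ∑ j, ⟪f i, b j⟫_𝕜 * ⟪b j, g i⟫_𝕜 := by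
        simp only [b.sum_inner_mul_inner]
    _ = finrank 𝕜 H := by rw [Finset.sum_comm]; simp [hb]

theorem norm_sq_eq_of_tight_of_uniform {f : ι → H} {A : ℝ}
    (htight : ∀ x, ∑ i, ‖⟪f i, x⟫_𝕜‖ ^ 2 = A * ‖x‖ ^ 2) (huniform : ∀ i j, ‖f i‖ = ‖f j‖)
    (i : ι) : ‖f i‖ ^ 2 = A * finrank 𝕜 H / Fintype.card ι := by
  have hcard : (0 : ℝ) < Fintype.card ι := Nat.cast_pos.2 (Fintype.card_pos_iff.2 ⟨i⟩)
  rw [← sum_norm_sq_eq_mul_finrank_of_tight htight, eq_div_iff hcard.ne']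
  simp [huniform _ i, mul_comm]

end Frame

section PowerMean

variable {ι : Type*} [Fintype ι]

theorem mean_le_rpow_mean (a : ι → ℝ) (ha : ∀ i, 0 ≤ a i) {p : ℝ} (hp : 1 ≤ p) :
    1 / (Fintype.card ι : ℝ) * ∑ i, a i ≤
      (1 / (Fintype.card ι : ℝ) * ∑ i, a i ^ p) ^ (1 / p) := by
  rcases isEmpty_or_nonempty ι with _ | _
  · simp [Real.zero_rpow (inv_ne_zero (by positivity : p ≠ 0))]
  · have hw : ∑ _i : ι, 1 / (Fintype.card ι : ℝ) = 1 := by simp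
    simpa only [Finset.mul_sum] using
      Real.arith_mean_le_rpow_mean Finset.univ (fun _ => 1 / (Fintype.card ι : ℝ)) a
        (fun _ _ => by positivity) hw (fun i _ => ha i) hp

theorem rpow_mean_const [Nonempty ι] {c : ℝ} (hc : 0 ≤ c) {p : ℝ} (hp : p ≠ 0) :
    (1 / (Fintype.card ι : ℝ) * ∑ _i : ι, c ^ p) ^ (1 / p) = c := by
  rw [Finset.sum_const, Finset.card_univ, nsmul_eq_mul, ← mul_assoc, one_div_mul_cancel
    (Nat.cast_ne_zero.2 Fintype.card_ne_zero), one_mul, ← Real.rpow_mul hc, mul_one_div_cancel hp,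
    Real.rpow_one]

end PowerMean

theorem inner_ofReal_smul_self {H : Type*} [NormedAddCommGroup H] [InnerProductSpace ℂ H]
    (r : ℝ) (x : H) : ⟪(r : ℂ) • x, x⟫ = ((r * ‖x‖ ^ 2 : ℝ) : ℂ) := by
  rw [inner_smul_left, inner_self_eq_norm_sq_to_K, Complex.conj_ofReal]
  push_cast
  -- the cast in `inner_self_eq_norm_sq_to_K` is `RCLike.ofReal`, which is `Complex.ofReal` by `rfl`
  rfl

/-- Let `F` be a uniform tight frame with bound `A > 0` for an
`n`-dimensional complex inner product space `H` and let `p > 1`.  Then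
`⟨f i, f i / A⟩ = n/N` for all `i`, the `1`-erasure spectral average error of `F`
with its canonical dual equals `n/N`, and the canonical dual `(f i / A)`
minimizes the `1`-erasure spectral average error among all dual frames of `F`. -/
theorem stmt_14 {H : Type*} [NormedAddCommGroup H] [InnerProductSpace ℂ H]
    [FiniteDimensional ℂ H] (n N : ℕ) (hn : Module.finrank ℂ H = n)
    (f : Fin N → H) (A : ℝ) (hA : 0 < A)
    (htight : ∀ x : H, ∑ i, ‖⟪f i, x⟫‖ ^ 2 = A * ‖x‖ ^ 2)
    (huniform : ∀ i j, ‖f i‖ = ‖f j‖)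
    (p : ℝ) (hp : 1 < p) :
    (∀ i, ⟪(A : ℂ)⁻¹ • f i, f i⟫ = (n : ℂ) / N) ∧
      ((1 / (N : ℝ)) * ∑ i, ‖⟪(A : ℂ)⁻¹ • f i, f i⟫‖ ^ p) ^ (1 / p) = (n : ℝ) / N ∧
      (∀ g : Fin N → H, (∀ x : H, x = ∑ i, ⟪f i, x⟫ • g i) →
        ((1 / (N : ℝ)) * ∑ i, ‖⟪(A : ℂ)⁻¹ • f i, f i⟫‖ ^ p) ^ (1 / p) ≤
          ((1 / (N : ℝ)) * ∑ i, ‖⟪g i, f i⟫‖ ^ p) ^ (1 / p)) := by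
  rcases N.eq_zero_or_pos with rfl | hN
  · simp [Real.zero_rpow (inv_ne_zero (by positivity : p ≠ 0))]
  have : Nonempty (Fin N) := ⟨⟨0, hN⟩⟩
  have hdiag : ∀ i, ⟪(A : ℂ)⁻¹ • f i, f i⟫ = ((n / N : ℝ) : ℂ) := fun i => by
    rw [← Complex.ofReal_inv, inner_ofReal_smul_self, norm_sq_eq_of_tight_of_uniform htight
      huniform i, hn, Fintype.card_fin]
    congr 1
    field_simp
  have hmean : ((1 / (N : ℝ)) * ∑ i, ‖⟪(A : ℂ)⁻¹ • f i, f i⟫‖ ^ p) ^ (1 / p) = n / N := by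
    simpa [hdiag] using rpow_mean_const (ι := Fin N) (by positivity : (0 : ℝ) ≤ n / N)
      (by positivity : p ≠ 0)
  refine ⟨fun i => by simp [hdiag], hmean, fun g hdual => ?_⟩
  calc ((1 / (N : ℝ)) * ∑ i, ‖⟪(A : ℂ)⁻¹ • f i, f i⟫‖ ^ p) ^ (1 / p)
      = 1 / (N : ℝ) * ‖∑ i, ⟪f i, g i⟫‖ := by
        rw [hmean, sum_inner_eq_finrank_of_dual hdual, hn]; simp [div_eq_inv_mul]
    _ ≤ 1 / (N : ℝ) * ∑ i, ‖⟪g i, f i⟫‖ := by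
        simp only [norm_inner_symm (g _)]
        gcongr
        exact norm_sum_le _ _
    _ ≤ ((1 / (N : ℝ)) * ∑ i, ‖⟪g i, f i⟫‖ ^ p) ^ (1 / p) := by
        simpa using mean_le_rpow_mean (fun i => ‖⟪g i, f i⟫‖) (fun _ => norm_nonneg _) hp.le
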